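/- (Theorem 5.1, divergence-free part) For all 1 ≤ i, j ≤ n, setting λ̄_{ij} = (6/h²)(τ_i²/σ_i + τ_j²/σ_j), U_{ij} = τ_j σ_i · s̄_i c̃_jᵀ ∈ ℝ^{n×(n+1)} and V_{ij} = −τ_i σ_j · c̃_i s̄_jᵀ ∈ ℝ^{(n+1)×n}, one has U_{ij} Ā − B̄ V_{ij} B̄ = (h²λ̄_{ij}/6) U_{ij} D̄, −B̄ᵀ U_{ij} B̄ᵀ + Ā V_{ij} = (h²λ̄_{ij}/6) D̄ V_{ij}, and the discrete divergence-free constraint B̄ᵀ U_{ij} D̄ + D̄ V_{ij} B̄ = 0. -/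

import Mathlib

open Matrix Real

/-- `τ_i = -2 sin(iπ/(2n))`. -/
noncomputable def tau (n i : ℕ) : ℝ := -2 * Real.sin ((i : ℝ) * Real.pi / (2 * n))

/-- `σ_i = 2(2 + cos(iπ/n))`. -/
noncomputable def sigma (n i : ℕ) : ℝ := 2 * (2 + Real.cos ((i : ℝ) * Real.pi / n))

/-- `ν_j = 1` for `1 ≤ j ≤ n-1` and `ν_0 = ν_n = 1/√2`. -/
noncomputable def nubar (n j : ℕ) : ℝ := if j = 0 ∨ j = n then 1 / Real.sqrt 2 else 1

/-- Neumann stiffness matrix `Ā ∈ ℝ^{(n+1)×(n+1)}` with diagonal `(1, 2, …, 2, 1)`. -/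
def Abar (n : ℕ) : Matrix (Fin (n + 1)) (Fin (n + 1)) ℝ :=
  Matrix.of fun k l =>
    if (k : ℕ) = (l : ℕ) then (if (k : ℕ) = 0 ∨ (k : ℕ) = n then 1 else 2)
    else if (k : ℕ) + 1 = (l : ℕ) ∨ (l : ℕ) + 1 = (k : ℕ) then -1 else 0

/-- Neumann mass matrix `D̄ ∈ ℝ^{(n+1)×(n+1)}` with diagonal `(2, 4, …, 4, 2)`. -/
def Dbar (n : ℕ) : Matrix (Fin (n + 1)) (Fin (n + 1)) ℝ :=
  Matrix.of fun k l =>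
    if (k : ℕ) = (l : ℕ) then (if (k : ℕ) = 0 ∨ (k : ℕ) = n then 2 else 4)
    else if (k : ℕ) + 1 = (l : ℕ) ∨ (l : ℕ) + 1 = (k : ℕ) then 1 else 0

/-- Neumann difference matrix `B̄ ∈ ℝ^{n×(n+1)}`. -/
def Bbar (n : ℕ) : Matrix (Fin n) (Fin (n + 1)) ℝ :=
  Matrix.of fun k l =>
    if (l : ℕ) = (k : ℕ) then -1 else if (l : ℕ) = (k : ℕ) + 1 then 1 else 0

/-- The vector `s̄_j ∈ ℝ^n` with entries `(s̄_j)_k = ν_j sin((2k-1)jπ/(2n))`. -/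
noncomputable def sbarvec (n j : ℕ) : Fin n → ℝ :=
  fun k => nubar n j * Real.sin (((2 * (k : ℕ) + 1) * j : ℕ) * Real.pi / (2 * n))

/-- The vector `c̃_j ∈ ℝ^{n+1} = ν_j (1, cos(jπ/n), …, cos((n-1)jπ/n), (-1)^j)ᵀ`;
equivalently `(c̃_j)_k = ν_j cos(kjπ/n)` for `0 ≤ k ≤ n`. -/
noncomputable def ctilde (n j : ℕ) : Fin (n + 1) → ℝ :=
  fun k => nubar n j * Real.cos (((k : ℕ) * j : ℕ) * Real.pi / n)

noncomputable def wt (n : ℕ) (l : Fin (n+1)) : ℝ :=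
  if (l : ℕ) = 0 ∨ (l : ℕ) = n then 1/2 else 1

lemma wt_mk (n L : ℕ) (h : L < n+1) :
    wt n ⟨L, h⟩ = if L = 0 ∨ L = n then 1/2 else 1 := rfl

lemma ctilde_mk (n j a : ℕ) (h : a < n+1) :
    ctilde n j ⟨a, h⟩ = nubar n j * Real.cos (((a * j : ℕ) : ℝ) * Real.pi / n) := rfl

lemma sbarvec_mk (n j a : ℕ) (h : a < n) :
    sbarvec n j ⟨a, h⟩ = nubar n j * Real.sin ((((2*a+1) * j : ℕ) : ℝ) * Real.pi / (2*n)) := rfl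

lemma Abar_mm (n a L : ℕ) (ha : a < n+1) (hL : L < n+1) :
    Abar n ⟨a, ha⟩ ⟨L, hL⟩ = if a = L then (if a = 0 ∨ a = n then 1 else 2)
      else if a + 1 = L ∨ L + 1 = a then -1 else 0 := rfl

lemma Abar_mr (n L : ℕ) (hL : L < n+1) (m : Fin (n+1)) :
    Abar n m ⟨L, hL⟩ = if (m:ℕ) = L then (if (m:ℕ) = 0 ∨ (m:ℕ) = n then 1 else 2)
      else if (m:ℕ) + 1 = L ∨ L + 1 = (m:ℕ) then -1 else 0 := rfl

lemma Dbar_mm (n a L : ℕ) (ha : a < n+1) (hL : L < n+1) :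
    Dbar n ⟨a, ha⟩ ⟨L, hL⟩ = if a = L then (if a = 0 ∨ a = n then 2 else 4)
      else if a + 1 = L ∨ L + 1 = a then 1 else 0 := rfl

lemma Dbar_mr (n L : ℕ) (hL : L < n+1) (m : Fin (n+1)) :
    Dbar n m ⟨L, hL⟩ = if (m:ℕ) = L then (if (m:ℕ) = 0 ∨ (m:ℕ) = n then 2 else 4)
      else if (m:ℕ) + 1 = L ∨ L + 1 = (m:ℕ) then 1 else 0 := rfl

lemma Bbar_mm (n a L : ℕ) (ha : a < n) (hL : L < n+1) :
    Bbar n ⟨a, ha⟩ ⟨L, hL⟩ = if L = a then -1 else if L = a + 1 then 1 else 0 := rfl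

lemma Bbar_mr (n L : ℕ) (hL : L < n+1) (k : Fin n) :
    Bbar n k ⟨L, hL⟩ = if L = (k:ℕ) then -1 else if L = (k:ℕ) + 1 then 1 else 0 := rfl

lemma Bbar_ml (n a : ℕ) (ha : a < n) (m : Fin (n+1)) :
    Bbar n ⟨a, ha⟩ m = if (m:ℕ) = a then -1 else if (m:ℕ) = a + 1 then 1 else 0 := rfl

lemma Abar_comm (n : ℕ) (k l : Fin (n+1)) : Abar n k l = Abar n l k := by
  simp only [Abar, Matrix.of_apply]
  split_ifs <;> first | rfl | omega

lemma Dbar_comm (n : ℕ) (k l : Fin (n+1)) : Dbar n k l = Dbar n l k := by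
  simp only [Dbar, Matrix.of_apply]
  split_ifs <;> first | rfl | omega

lemma sum_support_le₁ {N : ℕ} (f : Fin N → ℝ) (a : Fin N)
    (h : ∀ m, m ≠ a → f m = 0) : ∑ m, f m = f a :=
  Finset.sum_eq_single_of_mem a (Finset.mem_univ a) fun b _ hb => h b hb

lemma sum_support_le₂ {N : ℕ} (f : Fin N → ℝ) (a b : Fin N) (hab : a ≠ b)
    (h : ∀ m, m ≠ a → m ≠ b → f m = 0) : ∑ m, f m = f a + f b := by
  have h1 : ∑ m ∈ ({a, b} : Finset (Fin N)), f m = ∑ m, f m := by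
    refine Finset.sum_subset (Finset.subset_univ _) ?_
    intro x _ hx
    simp only [Finset.mem_insert, Finset.mem_singleton, not_or] at hx
    exact h x hx.1 hx.2
  rw [← h1, Finset.sum_pair hab]

lemma sum_support_le₃ {N : ℕ} (f : Fin N → ℝ) (a b c : Fin N)
    (hab : a ≠ b) (hac : a ≠ c) (hbc : b ≠ c)
    (h : ∀ m, m ≠ a → m ≠ b → m ≠ c → f m = 0) : ∑ m, f m = f a + (f b + f c) := by
  have h1 : ∑ m ∈ ({a, b, c} : Finset (Fin N)), f m = ∑ m, f m := by
    refine Finset.sum_subset (Finset.subset_univ _) ?_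
    intro x _ hx
    simp only [Finset.mem_insert, Finset.mem_singleton, not_or] at hx
    exact h x hx.1 hx.2.1 hx.2.2
  rw [← h1, Finset.sum_insert (by simp [hab, hac]), Finset.sum_pair hbc]

lemma tausq (n j : ℕ) (hn0 : (n:ℝ) ≠ 0) :
    tau n j ^ 2 = 2 - 2 * Real.cos ((j:ℝ) * Real.pi / n) := by
  have hx : (j:ℝ) * Real.pi / n = 2 * ((j:ℝ) * Real.pi / (2*n)) := by
    field_simp
  rw [tau, hx, Real.cos_two_mul]
  linear_combination 4 * Real.sin_sq_add_cos_sq ((j:ℝ) * Real.pi / (2*n))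

lemma sumD (n : ℕ) (hn : 2 ≤ n) (j : ℕ) (l : Fin (n+1)) :
    ∑ m, ctilde n j m * Dbar n m l = sigma n j * (wt n l * ctilde n j l) := by
  have hn0 : (n:ℝ) ≠ 0 := Nat.cast_ne_zero.mpr (by omega)
  obtain ⟨L, hL⟩ := l
  rcases eq_or_ne L 0 with h0 | h0
  · subst h0
    rw [sum_support_le₂ _ ⟨0, by omega⟩ ⟨1, by omega⟩
      (Fin.ne_of_val_ne (show (0:ℕ) ≠ 1 by omega)) (fun m hma hmb => ?_)]
    · rw [Dbar_mm, Dbar_mm, if_pos rfl, if_pos (by omega), if_neg (by omega),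
        if_pos (by omega)]
      have hw : wt n ⟨0, hL⟩ = 1/2 := by norm_num [wt, wt_mk]
      rw [hw]
      simp only [ctilde_mk, sigma]
      norm_num
      ring
    · have hm0 : (m:ℕ) ≠ 0 := fun h => hma (Fin.ext h)
      have hm1 : (m:ℕ) ≠ 1 := fun h => hmb (Fin.ext h)
      rw [Dbar_mr, if_neg (by omega), if_neg (by omega), mul_zero]
  rcases eq_or_ne L n with h1 | h1
  · subst h1
    rw [sum_support_le₂ _ ⟨L-1, by omega⟩ ⟨L, by omega⟩
      (Fin.ne_of_val_ne (show L-1 ≠ L by omega)) (fun m hma hmb => ?_)]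
    · rw [Dbar_mm, Dbar_mm, if_neg (by omega), if_pos (by omega), if_pos rfl,
        if_pos (by omega)]
      have hw : wt L ⟨L, hL⟩ = 1/2 := by norm_num [wt, wt_mk]
      rw [hw]
      simp only [ctilde_mk]
      have e0 : (((L*j : ℕ)) : ℝ) * Real.pi / L = (j:ℝ) * Real.pi := by
        push_cast; field_simp
      have e1 : ((((L-1)*j : ℕ)) : ℝ) * Real.pi / L
          = (j:ℝ) * Real.pi - (j:ℝ) * Real.pi / L := by
        rw [Nat.cast_mul, Nat.cast_sub (by omega : 1 ≤ L), Nat.cast_one]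
        field_simp
      rw [e0, e1, Real.cos_sub, Real.sin_nat_mul_pi]
      simp only [sigma]
      ring
    · have hm0 : (m:ℕ) ≠ L-1 := fun h => hma (Fin.ext h)
      have hm1 : (m:ℕ) ≠ L := fun h => hmb (Fin.ext h)
      rw [Dbar_mr, if_neg (by omega), if_neg (by omega), mul_zero]
  · -- interior
    rw [sum_support_le₃ _ ⟨L-1, by omega⟩ ⟨L, by omega⟩ ⟨L+1, by omega⟩
      (Fin.ne_of_val_ne (show L-1 ≠ L by omega))
      (Fin.ne_of_val_ne (show L-1 ≠ L+1 by omega))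
      (Fin.ne_of_val_ne (show L ≠ L+1 by omega)) (fun m hma hmb hmc => ?_)]
    · rw [Dbar_mm, Dbar_mm, Dbar_mm, if_neg (by omega), if_pos (by omega),
        if_pos rfl, if_neg (by omega), if_neg (by omega), if_pos (by omega)]
      simp only [ctilde_mk, wt_mk]
      rw [if_neg (by omega)]
      have e1 : ((((L-1)*j : ℕ)) : ℝ) * Real.pi / n
          = (L:ℝ) * j * Real.pi / n - (j:ℝ) * Real.pi / n := by
        rw [Nat.cast_mul, Nat.cast_sub (by omega : 1 ≤ L), Nat.cast_one]
        ring
      have e2 : (((L*j : ℕ)) : ℝ) * Real.pi / n = (L:ℝ) * j * Real.pi / n := by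
        push_cast; ring
      have e3 : ((((L+1)*j : ℕ)) : ℝ) * Real.pi / n
          = (L:ℝ) * j * Real.pi / n + (j:ℝ) * Real.pi / n := by
        push_cast; ring
      rw [e1, e2, e3, Real.cos_sub, Real.cos_add]
      simp only [sigma]
      ring
    · have hm0 : (m:ℕ) ≠ L-1 := fun h => hma (Fin.ext h)
      have hm1 : (m:ℕ) ≠ L := fun h => hmb (Fin.ext h)
      have hm2 : (m:ℕ) ≠ L+1 := fun h => hmc (Fin.ext h)
      rw [Dbar_mr, if_neg (by omega), if_neg (by omega), mul_zero]

lemma sumA (n : ℕ) (hn : 2 ≤ n) (j : ℕ) (l : Fin (n+1)) :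
    ∑ m, ctilde n j m * Abar n m l = tau n j ^ 2 * (wt n l * ctilde n j l) := by
  have hn0 : (n:ℝ) ≠ 0 := Nat.cast_ne_zero.mpr (by omega)
  obtain ⟨L, hL⟩ := l
  rcases eq_or_ne L 0 with h0 | h0
  · subst h0
    rw [sum_support_le₂ _ ⟨0, by omega⟩ ⟨1, by omega⟩
      (Fin.ne_of_val_ne (show (0:ℕ) ≠ 1 by omega)) (fun m hma hmb => ?_)]
    · rw [Abar_mm, Abar_mm, if_pos rfl, if_pos (by omega), if_neg (by omega),
        if_pos (by omega)]
      have hw : wt n ⟨0, hL⟩ = 1/2 := by norm_num [wt, wt_mk]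
      rw [hw, tausq n j hn0]
      simp only [ctilde_mk]
      norm_num
      ring
    · have hm0 : (m:ℕ) ≠ 0 := fun h => hma (Fin.ext h)
      have hm1 : (m:ℕ) ≠ 1 := fun h => hmb (Fin.ext h)
      rw [Abar_mr, if_neg (by omega), if_neg (by omega), mul_zero]
  rcases eq_or_ne L n with h1 | h1
  · subst h1
    rw [sum_support_le₂ _ ⟨L-1, by omega⟩ ⟨L, by omega⟩
      (Fin.ne_of_val_ne (show L-1 ≠ L by omega)) (fun m hma hmb => ?_)]
    · rw [Abar_mm, Abar_mm, if_neg (by omega), if_pos (by omega), if_pos rfl,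
        if_pos (by omega)]
      have hw : wt L ⟨L, hL⟩ = 1/2 := by norm_num [wt, wt_mk]
      rw [hw, tausq L j (by exact_mod_cast Nat.cast_ne_zero.mpr (by omega))]
      simp only [ctilde_mk]
      have e0 : (((L*j : ℕ)) : ℝ) * Real.pi / L = (j:ℝ) * Real.pi := by
        push_cast
        rw [div_eq_iff (by exact_mod_cast Nat.cast_ne_zero.mpr (by omega : L ≠ 0))]
        ring
      have e1 : ((((L-1)*j : ℕ)) : ℝ) * Real.pi / L
          = (j:ℝ) * Real.pi - (j:ℝ) * Real.pi / L := by
        rw [Nat.cast_mul, Nat.cast_sub (by omega : 1 ≤ L), Nat.cast_one]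
        rw [eq_sub_iff_add_eq, ← add_div,
          div_eq_iff (by exact_mod_cast Nat.cast_ne_zero.mpr (by omega : L ≠ 0) : (L:ℝ) ≠ 0)]
        ring
      rw [e0, e1, Real.cos_sub, Real.sin_nat_mul_pi]
      ring
    · have hm0 : (m:ℕ) ≠ L-1 := fun h => hma (Fin.ext h)
      have hm1 : (m:ℕ) ≠ L := fun h => hmb (Fin.ext h)
      rw [Abar_mr, if_neg (by omega), if_neg (by omega), mul_zero]
  · rw [sum_support_le₃ _ ⟨L-1, by omega⟩ ⟨L, by omega⟩ ⟨L+1, by omega⟩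
      (Fin.ne_of_val_ne (show L-1 ≠ L by omega))
      (Fin.ne_of_val_ne (show L-1 ≠ L+1 by omega))
      (Fin.ne_of_val_ne (show L ≠ L+1 by omega)) (fun m hma hmb hmc => ?_)]
    · rw [Abar_mm, Abar_mm, Abar_mm, if_neg (by omega), if_pos (by omega),
        if_pos rfl, if_neg (by omega), if_neg (by omega), if_pos (by omega)]
      have hw : wt n ⟨L, hL⟩ = 1 := by norm_num [wt, wt_mk, h0, h1]
      rw [hw, tausq n j hn0]
      simp only [ctilde_mk]
      have e1 : ((((L-1)*j : ℕ)) : ℝ) * Real.pi / n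
          = (L:ℝ) * j * Real.pi / n - (j:ℝ) * Real.pi / n := by
        rw [Nat.cast_mul, Nat.cast_sub (by omega : 1 ≤ L), Nat.cast_one]
        ring
      have e2 : (((L*j : ℕ)) : ℝ) * Real.pi / n = (L:ℝ) * j * Real.pi / n := by
        push_cast; ring
      have e3 : ((((L+1)*j : ℕ)) : ℝ) * Real.pi / n
          = (L:ℝ) * j * Real.pi / n + (j:ℝ) * Real.pi / n := by
        push_cast; ring
      rw [e1, e2, e3, Real.cos_sub, Real.cos_add]
      ring
    · have hm0 : (m:ℕ) ≠ L-1 := fun h => hma (Fin.ext h)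
      have hm1 : (m:ℕ) ≠ L := fun h => hmb (Fin.ext h)
      have hm2 : (m:ℕ) ≠ L+1 := fun h => hmc (Fin.ext h)
      rw [Abar_mr, if_neg (by omega), if_neg (by omega), mul_zero]

lemma sumBc (n : ℕ) (hn : 2 ≤ n) (j : ℕ) (k : Fin n) :
    ∑ m, Bbar n k m * ctilde n j m = tau n j * sbarvec n j k := by
  have hn0 : (n:ℝ) ≠ 0 := Nat.cast_ne_zero.mpr (by omega)
  obtain ⟨K, hK⟩ := k
  rw [sum_support_le₂ _ ⟨K, by omega⟩ ⟨K+1, by omega⟩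
    (Fin.ne_of_val_ne (show K ≠ K+1 by omega)) (fun m hma hmb => ?_)]
  · rw [Bbar_mm, Bbar_mm, if_pos rfl, if_neg (by omega), if_pos (by omega)]
    simp only [ctilde_mk, sbarvec_mk, tau]
    have e1 : (((K*j : ℕ)) : ℝ) * Real.pi / n
        = ((2*(K:ℝ)+1)*j) * Real.pi / (2*n) - (j:ℝ) * Real.pi / (2*n) := by
      push_cast
      field_simp
      ring
    have e2 : ((((K+1)*j : ℕ)) : ℝ) * Real.pi / n
        = ((2*(K:ℝ)+1)*j) * Real.pi / (2*n) + (j:ℝ) * Real.pi / (2*n) := by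
      push_cast
      field_simp
      ring
    have e3 : ((((2*K+1)*j : ℕ)) : ℝ) * Real.pi / (2*n)
        = ((2*(K:ℝ)+1)*j) * Real.pi / (2*n) := by
      push_cast; ring
    rw [e1, e2, e3, Real.cos_sub, Real.cos_add]
    ring
  · have hm0 : (m:ℕ) ≠ K := fun h => hma (Fin.ext h)
    have hm1 : (m:ℕ) ≠ K+1 := fun h => hmb (Fin.ext h)
    rw [Bbar_ml, if_neg (by omega), if_neg (by omega), zero_mul]

lemma sumBs (n : ℕ) (hn : 2 ≤ n) (j : ℕ) (l : Fin (n+1)) :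
    ∑ k, Bbar n k l * sbarvec n j k = tau n j * (wt n l * ctilde n j l) := by
  have hn0 : (n:ℝ) ≠ 0 := Nat.cast_ne_zero.mpr (by omega)
  have h2n0 : (2*(n:ℝ)) ≠ 0 := by positivity
  obtain ⟨L, hL⟩ := l
  rcases eq_or_ne L 0 with h0 | h0
  · subst h0
    rw [sum_support_le₁ _ ⟨0, by omega⟩ (fun m hma => ?_)]
    · rw [Bbar_mm, if_pos rfl]
      have hw : wt n ⟨0, hL⟩ = 1/2 := by norm_num [wt, wt_mk]
      rw [hw]
      simp only [ctilde_mk, sbarvec_mk, tau]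
      norm_num
      ring
    · have hm0 : (m:ℕ) ≠ 0 := fun h => hma (Fin.ext h)
      rw [Bbar_mr, if_neg (by omega), if_neg (by omega), zero_mul]
  rcases eq_or_ne L n with h1 | h1
  · subst h1
    rw [sum_support_le₁ _ ⟨L-1, by omega⟩ (fun m hma => ?_)]
    · rw [Bbar_mm, if_neg (by omega), if_pos (by omega)]
      have hw : wt L ⟨L, hL⟩ = 1/2 := by norm_num [wt, wt_mk]
      rw [hw]
      simp only [ctilde_mk, sbarvec_mk, tau]
      have hL0 : ((L:ℝ)) ≠ 0 := by exact_mod_cast Nat.cast_ne_zero.mpr (by omega : L ≠ 0)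
      have h2L0 : (2*(L:ℝ)) ≠ 0 := by
        simp only [ne_eq, mul_eq_zero, not_or]; exact ⟨two_ne_zero, hL0⟩
      have e1 : ((((2*(L-1)+1)*j : ℕ)) : ℝ) * Real.pi / (2*L)
          = (j:ℝ) * Real.pi - (j:ℝ) * Real.pi / (2*L) := by
        rw [Nat.cast_mul, Nat.cast_add, Nat.cast_mul, Nat.cast_sub (by omega : 1 ≤ L)]
        push_cast
        rw [eq_sub_iff_add_eq, ← add_div, div_eq_iff h2L0]
        ring
      have e0 : (((L*j : ℕ)) : ℝ) * Real.pi / L = (j:ℝ) * Real.pi := by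
        push_cast
        rw [div_eq_iff hL0]
        ring
      rw [e0, e1, Real.sin_sub, Real.sin_nat_mul_pi]
      ring
    · have hm0 : (m:ℕ) ≠ L-1 := fun h => hma (Fin.ext h)
      rw [Bbar_mr, if_neg (by omega), if_neg (by omega), zero_mul]
  · rw [sum_support_le₂ _ ⟨L-1, by omega⟩ ⟨L, by omega⟩
      (Fin.ne_of_val_ne (show L-1 ≠ L by omega)) (fun m hma hmb => ?_)]
    · rw [Bbar_mm, Bbar_mm, if_neg (by omega), if_pos (by omega), if_pos rfl]
      have hw : wt n ⟨L, hL⟩ = 1 := by norm_num [wt, wt_mk, h0, h1]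
      rw [hw]
      simp only [ctilde_mk, sbarvec_mk, tau]
      have e1 : ((((2*(L-1)+1)*j : ℕ)) : ℝ) * Real.pi / (2*n)
          = ((L:ℝ)*j) * Real.pi / n - (j:ℝ) * Real.pi / (2*n) := by
        rw [Nat.cast_mul, Nat.cast_add, Nat.cast_mul, Nat.cast_sub (by omega : 1 ≤ L)]
        push_cast
        field_simp
        ring
      have e2 : ((((2*L+1)*j : ℕ)) : ℝ) * Real.pi / (2*n)
          = ((L:ℝ)*j) * Real.pi / n + (j:ℝ) * Real.pi / (2*n) := by
        push_cast
        field_simp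
      have e0 : (((L*j : ℕ)) : ℝ) * Real.pi / n = ((L:ℝ)*j) * Real.pi / n := by
        push_cast; ring
      rw [e0, e1, e2, Real.sin_sub, Real.sin_add]
      ring
    · have hm0 : (m:ℕ) ≠ L-1 := fun h => hma (Fin.ext h)
      have hm1 : (m:ℕ) ≠ L := fun h => hmb (Fin.ext h)
      rw [Bbar_mr, if_neg (by omega), if_neg (by omega), zero_mul]

lemma mulA (n : ℕ) (hn : 2 ≤ n) (b : ℕ) {κ : Type*} (x : κ → ℝ) :
    Matrix.vecMulVec x (ctilde n b) * Abar n
      = (tau n b ^ 2) • Matrix.vecMulVec x (fun l => wt n l * ctilde n b l) := by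
  ext k l
  simp only [Matrix.mul_apply, Matrix.vecMulVec_apply, Matrix.smul_apply, smul_eq_mul]
  rw [show ∑ m, x k * ctilde n b m * Abar n m l
      = x k * ∑ m, ctilde n b m * Abar n m l from by
    rw [Finset.mul_sum]; exact Finset.sum_congr rfl fun m _ => by ring]
  rw [sumA n hn b l]; ring

lemma mulD (n : ℕ) (hn : 2 ≤ n) (b : ℕ) {κ : Type*} (x : κ → ℝ) :
    Matrix.vecMulVec x (ctilde n b) * Dbar n
      = (sigma n b) • Matrix.vecMulVec x (fun l => wt n l * ctilde n b l) := by
  ext k l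
  simp only [Matrix.mul_apply, Matrix.vecMulVec_apply, Matrix.smul_apply, smul_eq_mul]
  rw [show ∑ m, x k * ctilde n b m * Dbar n m l
      = x k * ∑ m, ctilde n b m * Dbar n m l from by
    rw [Finset.mul_sum]; exact Finset.sum_congr rfl fun m _ => by ring]
  rw [sumD n hn b l]; ring

lemma Bmul (n : ℕ) (hn : 2 ≤ n) (a : ℕ) (x : Fin n → ℝ) :
    Bbar n * Matrix.vecMulVec (ctilde n a) x
      = (tau n a) • Matrix.vecMulVec (sbarvec n a) x := by
  ext k q
  simp only [Matrix.mul_apply, Matrix.vecMulVec_apply, Matrix.smul_apply, smul_eq_mul]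
  rw [show ∑ m, Bbar n k m * (ctilde n a m * x q)
      = (∑ m, Bbar n k m * ctilde n a m) * x q from by
    rw [Finset.sum_mul]; exact Finset.sum_congr rfl fun m _ => by ring]
  rw [sumBc n hn a k]; ring

lemma mulB (n : ℕ) (hn : 2 ≤ n) (b : ℕ) {κ : Type*} (x : κ → ℝ) :
    Matrix.vecMulVec x (sbarvec n b) * Bbar n
      = (tau n b) • Matrix.vecMulVec x (fun l => wt n l * ctilde n b l) := by
  ext k l
  simp only [Matrix.mul_apply, Matrix.vecMulVec_apply, Matrix.smul_apply, smul_eq_mul]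
  rw [show ∑ q, x k * sbarvec n b q * Bbar n q l
      = x k * ∑ q, Bbar n q l * sbarvec n b q from by
    rw [Finset.mul_sum]; exact Finset.sum_congr rfl fun q _ => by ring]
  rw [sumBs n hn b l]; ring

lemma BTmul (n : ℕ) (hn : 2 ≤ n) (a : ℕ) {κ : Type*} (x : κ → ℝ) :
    (Bbar n)ᵀ * Matrix.vecMulVec (sbarvec n a) x
      = (tau n a) • Matrix.vecMulVec (fun l => wt n l * ctilde n a l) x := by
  ext l q
  simp only [Matrix.mul_apply, Matrix.vecMulVec_apply, Matrix.smul_apply, smul_eq_mul,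
    Matrix.transpose_apply]
  rw [show ∑ m, Bbar n m l * (sbarvec n a m * x q)
      = (∑ m, Bbar n m l * sbarvec n a m) * x q from by
    rw [Finset.sum_mul]; exact Finset.sum_congr rfl fun m _ => by ring]
  rw [sumBs n hn a l]; ring

lemma mulBT (n : ℕ) (hn : 2 ≤ n) (b : ℕ) {κ : Type*} (x : κ → ℝ) :
    Matrix.vecMulVec x (ctilde n b) * (Bbar n)ᵀ
      = (tau n b) • Matrix.vecMulVec x (sbarvec n b) := by
  ext k q
  simp only [Matrix.mul_apply, Matrix.vecMulVec_apply, Matrix.smul_apply, smul_eq_mul,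
    Matrix.transpose_apply]
  rw [show ∑ m, x k * ctilde n b m * Bbar n q m
      = x k * ∑ m, Bbar n q m * ctilde n b m from by
    rw [Finset.mul_sum]; exact Finset.sum_congr rfl fun m _ => by ring]
  rw [sumBc n hn b q]; ring

lemma Amul (n : ℕ) (hn : 2 ≤ n) (a : ℕ) {κ : Type*} (x : κ → ℝ) :
    Abar n * Matrix.vecMulVec (ctilde n a) x
      = (tau n a ^ 2) • Matrix.vecMulVec (fun l => wt n l * ctilde n a l) x := by
  ext l q
  simp only [Matrix.mul_apply, Matrix.vecMulVec_apply, Matrix.smul_apply, smul_eq_mul]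
  rw [show ∑ m, Abar n l m * (ctilde n a m * x q)
      = (∑ m, ctilde n a m * Abar n m l) * x q from by
    rw [Finset.sum_mul]
    exact Finset.sum_congr rfl fun m _ => by rw [Abar_comm n l m]; ring]
  rw [sumA n hn a l]; ring

lemma Dmul (n : ℕ) (hn : 2 ≤ n) (a : ℕ) {κ : Type*} (x : κ → ℝ) :
    Dbar n * Matrix.vecMulVec (ctilde n a) x
      = (sigma n a) • Matrix.vecMulVec (fun l => wt n l * ctilde n a l) x := by
  ext l q
  simp only [Matrix.mul_apply, Matrix.vecMulVec_apply, Matrix.smul_apply, smul_eq_mul]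
  rw [show ∑ m, Dbar n l m * (ctilde n a m * x q)
      = (∑ m, ctilde n a m * Dbar n m l) * x q from by
    rw [Finset.sum_mul]
    exact Finset.sum_congr rfl fun m _ => by rw [Dbar_comm n l m]; ring]
  rw [sumD n hn a l]; ring

/-- Theorem 5.1, divergence-free part: for `1 ≤ i, j ≤ n`, the pair
`(U_{ij}, V_{ij}) = (τ_j σ_i · s̄_i c̃_jᵀ, -τ_i σ_j · c̃_i s̄_jᵀ)` is an eigen-solution
with eigenvalue `λ̄_{ij} = (6/h²)(τ_i²/σ_i + τ_j²/σ_j)` and satisfies the discrete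
divergence-free constraint. -/
theorem stmt18 (n : ℕ) (hn : 2 ≤ n) (h : ℝ) (hh : h = 1 / n) (i j : Fin n)
    (lam : ℝ)
    (hlam : lam = 6 / h ^ 2 * ((tau n ((i : ℕ) + 1)) ^ 2 / sigma n ((i : ℕ) + 1) +
      (tau n ((j : ℕ) + 1)) ^ 2 / sigma n ((j : ℕ) + 1)))
    (U : Matrix (Fin n) (Fin (n + 1)) ℝ)
    (hU : U = (tau n ((j : ℕ) + 1) * sigma n ((i : ℕ) + 1)) •
      Matrix.vecMulVec (sbarvec n ((i : ℕ) + 1)) (ctilde n ((j : ℕ) + 1)))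
    (V : Matrix (Fin (n + 1)) (Fin n) ℝ)
    (hV : V = (-(tau n ((i : ℕ) + 1) * sigma n ((j : ℕ) + 1))) •
      Matrix.vecMulVec (ctilde n ((i : ℕ) + 1)) (sbarvec n ((j : ℕ) + 1))) :
    U * Abar n - Bbar n * V * Bbar n = (h ^ 2 * lam / 6) • (U * Dbar n) ∧
    -((Bbar n)ᵀ * U * (Bbar n)ᵀ) + Abar n * V = (h ^ 2 * lam / 6) • (Dbar n * V) ∧
    (Bbar n)ᵀ * U * Dbar n + Dbar n * V * Bbar n = 0 := by
  subst hU hV hlam hh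
  have hn0 : (n:ℝ) ≠ 0 := Nat.cast_ne_zero.mpr (by omega)
  set I : ℕ := (i : ℕ) + 1 with hI
  set J : ℕ := (j : ℕ) + 1 with hJ
  have hσI : sigma n I ≠ 0 := by
    have := Real.neg_one_le_cos ((I:ℝ) * Real.pi / n)
    simp only [sigma]; nlinarith
  have hσJ : sigma n J ≠ 0 := by
    have := Real.neg_one_le_cos ((J:ℝ) * Real.pi / n)
    simp only [sigma]; nlinarith
  have hC : ((1:ℝ) / n) ^ 2 * (6 / ((1:ℝ) / n) ^ 2 *
      (tau n I ^ 2 / sigma n I + tau n J ^ 2 / sigma n J)) / 6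
      = tau n I ^ 2 / sigma n I + tau n J ^ 2 / sigma n J := by
    field_simp
  rw [hC]
  refine ⟨?_, ?_, ?_⟩
  · rw [Matrix.smul_mul, mulA n hn J (sbarvec n I),
      Matrix.mul_smul, Bmul n hn I (sbarvec n J),
      Matrix.smul_mul, Matrix.smul_mul, mulB n hn J (sbarvec n I),
      Matrix.smul_mul, mulD n hn J (sbarvec n I)]
    rw [smul_smul, smul_smul, smul_smul, smul_smul, smul_smul, ← sub_smul]
    congr 1
    field_simp
    ring
  · simp only [Matrix.mul_smul, Matrix.smul_mul]
    rw [BTmul n hn I (ctilde n J), Amul n hn I (sbarvec n J),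
      Dmul n hn I (sbarvec n J)]
    simp only [Matrix.mul_smul, Matrix.smul_mul]
    rw [mulBT n hn J (fun l => wt n l * ctilde n I l)]
    simp only [smul_smul]
    rw [← neg_smul, ← add_smul]
    congr 1
    field_simp
    ring
  · simp only [Matrix.mul_smul, Matrix.smul_mul]
    rw [BTmul n hn I (ctilde n J), Dmul n hn I (sbarvec n J)]
    simp only [Matrix.mul_smul, Matrix.smul_mul]
    rw [mulD n hn J (fun l => wt n l * ctilde n I l),
      mulB n hn J (fun l => wt n l * ctilde n I l)]
    simp only [smul_smul]
    rw [← add_smul]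
    convert zero_smul ℝ _ using 2
    ring
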